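/- Let G = (V,E,F) be a finite tessellation of the closed orientable surface of genus g ≥ 2, with at least two vertices, such that Φ(x) < 0 for every vertex. Then every vertex x satisfies deg(x) ≤ 12g - 7. -/
import Mathlib


open scoped BigOperators

/-- A (combinatorial model of a) finite tessellation of the closed orientable
surface of genus `g`: vertices `V`, faces `F`, the set `inc x` of faces incident
to a vertex `x`, the set `bd σ` of vertices on the boundary of a face `σ`,
vertex and face degrees (all at least `3`), together with the Gauss–Bonnet
formula `Σₓ Φ(x) = χ(S_g) = 2 - 2g` for the combinatorial curvature
`Φ(x) = 1 - deg(x)/2 + Σ_{σ ∋ x} 1/deg(σ)`. -/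
structure Tessellation (g : ℕ) where
  V : Type
  F : Type
  [fintV : Fintype V]
  [fintF : Fintype F]
  inc : V → Finset F
  bd : F → Finset V
  vdeg : V → ℕ
  fdeg : F → ℕ
  card_inc : ∀ x, (inc x).card = vdeg x
  card_bd : ∀ σ, (bd σ).card = fdeg σ
  mem_inc_iff : ∀ x σ, σ ∈ inc x ↔ x ∈ bd σ
  three_le_vdeg : ∀ x, 3 ≤ vdeg x
  three_le_fdeg : ∀ σ, 3 ≤ fdeg σ
  gauss_bonnet :
    ∑ x : V, (1 - (vdeg x : ℝ) / 2 + ∑ σ ∈ inc x, (1 : ℝ) / (fdeg σ)) =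
      2 - 2 * (g : ℝ)

attribute [instance] Tessellation.fintV Tessellation.fintF

/-- Combinatorial curvature at a vertex. -/
noncomputable def Tessellation.phi {g : ℕ} (T : Tessellation g) (x : T.V) : ℝ :=
  1 - (T.vdeg x : ℝ) / 2 + ∑ σ ∈ T.inc x, (1 : ℝ) / (T.fdeg σ)

/-- In a tessellation of the genus-`g` surface (`g ≥ 2`) with at least two
vertices and everywhere negative combinatorial curvature, every vertex has
degree at most `12g - 7`. -/
theorem stmt12 (g : ℕ) (hg : 2 ≤ g) (T : Tessellation g)
    (hV : 2 ≤ Fintype.card T.V) (hneg : ∀ x, T.phi x < 0) :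
    ∀ x : T.V, T.vdeg x ≤ 12 * g - 7 := by
  intro x
  classical
  -- Φ(x) ≤ 1 - deg(x)/6
  have hphi_le : T.phi x ≤ 1 - (T.vdeg x : ℝ) / 6 := by
    have hsum : ∑ σ ∈ T.inc x, (1 : ℝ) / (T.fdeg σ) ≤ (T.vdeg x : ℝ) / 3 := by
      calc ∑ σ ∈ T.inc x, (1 : ℝ) / (T.fdeg σ)
          ≤ ∑ σ ∈ T.inc x, (1 : ℝ) / 3 := by
            apply Finset.sum_le_sum
            intro σ _
            apply one_div_le_one_div_of_le (by norm_num)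
            exact_mod_cast T.three_le_fdeg σ
        _ = (T.vdeg x : ℝ) / 3 := by
            rw [Finset.sum_const, T.card_inc]; ring
    have := T.three_le_vdeg x
    unfold Tessellation.phi
    linarith
  -- Φ(x) > 2 - 2g
  have hgb : ∑ y : T.V, T.phi y = 2 - 2 * (g : ℝ) := T.gauss_bonnet
  obtain ⟨y, hy⟩ : ∃ y : T.V, y ≠ x := by
    have := Fintype.exists_ne_of_one_lt_card (by omega) x
    exact this
  have hsplit : T.phi x + ∑ y ∈ Finset.univ.erase x, T.phi y = 2 - 2 * (g : ℝ) := by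
    rw [← hgb, Finset.add_sum_erase _ _ (Finset.mem_univ x)]
  have hrest : ∑ y ∈ Finset.univ.erase x, T.phi y < 0 := by
    apply Finset.sum_neg (fun z _ => hneg z)
    exact ⟨y, Finset.mem_erase.mpr ⟨hy, Finset.mem_univ y⟩⟩
  have hlt : 2 - 2 * (g : ℝ) < T.phi x := by linarith
  have hd : (T.vdeg x : ℝ) < 12 * (g : ℝ) - 6 := by linarith
  have : T.vdeg x < 12 * g - 6 := by
    have h7 : (7:ℕ) ≤ 12 * g := by omega
    by_contra h
    push_neg at h
    have : (12 * g - 6 : ℕ) ≤ T.vdeg x := h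
    have : ((12 * g - 6 : ℕ) : ℝ) ≤ (T.vdeg x : ℝ) := by exact_mod_cast this
    rw [Nat.cast_sub (by omega)] at this
    push_cast at this
    linarith
  omega
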